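/- The non-convex tile T(D) = ∪_{B ∈ B(D)} P(B) has n-dimensional Lebesgue measure equal to Σ_{B ∈ B(D)} m(B)², which equals |det(𝐃)|. -/

import Mathlib

open Matrix MeasureTheory
open scoped ENNReal

noncomputable section

/-- The standard representative matrix `D = (I_r | M)`. -/
def Dmat {r m : ℕ} (M : Matrix (Fin r) (Fin m) ℤ) : Matrix (Fin r) (Fin r ⊕ Fin m) ℤ :=
  Matrix.fromCols 1 M

/-- The dual matrix `D̂ = (-Mᵀ | I_{n-r})`. -/
def Dhat {r m : ℕ} (M : Matrix (Fin r) (Fin m) ℤ) : Matrix (Fin m) (Fin r ⊕ Fin m) ℤ :=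
  Matrix.fromCols (-Mᵀ) 1

/-- The full matrix `𝐃 = (I_r, M ; -Mᵀ, I_{n-r})`. -/
def Dfull {r m : ℕ} (M : Matrix (Fin r) (Fin m) ℤ) :
    Matrix (Fin r ⊕ Fin m) (Fin r ⊕ Fin m) ℤ :=
  Matrix.fromBlocks 1 M (-Mᵀ) 1

/-- Column `j` of `D`, as a real vector. -/
def colD {r m : ℕ} (M : Matrix (Fin r) (Fin m) ℤ) (j : Fin r ⊕ Fin m) : Fin r → ℝ :=
  fun a => (Dmat M a j : ℝ)

/-- Column `j` of `D̂`, as a real vector. -/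
def colDhat {r m : ℕ} (M : Matrix (Fin r) (Fin m) ℤ) (j : Fin r ⊕ Fin m) : Fin m → ℝ :=
  fun a => (Dhat M a j : ℝ)

/-- An order-respecting enumeration of the columns in `B` (via `finSumFinEquiv`). -/
def colEnum {r m : ℕ} (B : Finset (Fin r ⊕ Fin m))
    (h : (B.image finSumFinEquiv).card = r) : Fin r → Fin r ⊕ Fin m :=
  fun i => finSumFinEquiv.symm ((B.image finSumFinEquiv).orderIsoOfFin h i)

/-- The multiplicity `m(B) = |det (D|_B)|` of an `r`-subset of columns. -/
def mult {r m : ℕ} (M : Matrix (Fin r) (Fin m) ℤ) (B : Finset (Fin r ⊕ Fin m)) : ℕ :=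
  if h : (B.image finSumFinEquiv).card = r then
    ((Dmat M).submatrix id (colEnum B h)).det.natAbs
  else 0

/-- `B` is a basis of `D`: an `r`-subset of columns with nonzero determinant. -/
def IsBasis {r m : ℕ} (M : Matrix (Fin r) (Fin m) ℤ) (B : Finset (Fin r ⊕ Fin m)) : Prop :=
  B.card = r ∧ mult M B ≠ 0

/-- Closed fundamental parallelepiped of the vectors `v i`, `i ∈ S`. -/
def PPc {ι κ : Type*} (v : ι → κ → ℝ) (S : Finset ι) : Set (κ → ℝ) :=
  {x | ∃ a : ι → ℝ, (∀ i ∈ S, 0 ≤ a i ∧ a i ≤ 1) ∧ x = ∑ i ∈ S, a i • v i}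

/-- Open fundamental parallelepiped of the vectors `v i`, `i ∈ S`. -/
def PPo {ι κ : Type*} (v : ι → κ → ℝ) (S : Finset ι) : Set (κ → ℝ) :=
  {x | ∃ a : ι → ℝ, (∀ i ∈ S, 0 < a i ∧ a i < 1) ∧ x = ∑ i ∈ S, a i • v i}

/-- The closed parallelepiped `P(B) = P₁(B) × P₂(B) ⊆ ℝⁿ`. -/
def Pclosed {r m : ℕ} (M : Matrix (Fin r) (Fin m) ℤ) (B : Finset (Fin r ⊕ Fin m)) :
    Set ((Fin r ⊕ Fin m) → ℝ) :=
  {x | (x ∘ Sum.inl) ∈ PPc (colD M) B ∧ (x ∘ Sum.inr) ∈ PPc (colDhat M) Bᶜ}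

/-- The open parallelepiped `P(B)° = P₁(B)° × P₂(B)°`. -/
def Popen {r m : ℕ} (M : Matrix (Fin r) (Fin m) ℤ) (B : Finset (Fin r ⊕ Fin m)) :
    Set ((Fin r ⊕ Fin m) → ℝ) :=
  {x | (x ∘ Sum.inl) ∈ PPo (colD M) B ∧ (x ∘ Sum.inr) ∈ PPo (colDhat M) Bᶜ}

/-- The tile `T(D) = ⋃_{B basis} P(B)`. -/
def Tile {r m : ℕ} (M : Matrix (Fin r) (Fin m) ℤ) : Set ((Fin r ⊕ Fin m) → ℝ) :=
  ⋃ B ∈ {B : Finset (Fin r ⊕ Fin m) | IsBasis M B}, Pclosed M B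

/-- The lattice vector `𝐃ᵀ z ∈ ℝⁿ` for `z ∈ ℤⁿ`. -/
def latVec {r m : ℕ} (M : Matrix (Fin r) (Fin m) ℤ) (z : (Fin r ⊕ Fin m) → ℤ) :
    (Fin r ⊕ Fin m) → ℝ :=
  fun j => ((Matrix.vecMul z (Dfull M)) j : ℝ)

/-- The integer lattice `im_ℤ(𝐃ᵀ)` spanned by the rows of `𝐃`. -/
def LatZ {r m : ℕ} (M : Matrix (Fin r) (Fin m) ℤ) : Submodule ℤ ((Fin r ⊕ Fin m) → ℤ) :=
  Submodule.span ℤ (Set.range fun i => Dfull M i)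

/-- `w` is a shifting vector: it does not lie in the span of any facet of `P(B)`
for any basis `B` (split form: neither its first `r` coordinates lie in the span of a
facet of `P₁(B)` nor its last `n-r` coordinates in the span of a facet of `P₂(B)`). -/
def IsShifting {r m : ℕ} (M : Matrix (Fin r) (Fin m) ℤ) (w : (Fin r ⊕ Fin m) → ℝ) : Prop :=
  ∀ B : Finset (Fin r ⊕ Fin m), IsBasis M B →
    (∀ j ∈ B, (w ∘ Sum.inl) ∉ Submodule.span ℝ (colD M '' ↑(B.erase j))) ∧
    (∀ j ∈ Bᶜ, (w ∘ Sum.inr) ∉ Submodule.span ℝ (colDhat M '' ↑(Bᶜ.erase j)))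

/-- `x` is `w`-associated with `B`: `x + εw ∈ P(B)` for all sufficiently small `ε > 0`. -/
def WAssoc {r m : ℕ} (M : Matrix (Fin r) (Fin m) ℤ) (w : (Fin r ⊕ Fin m) → ℝ)
    (x : (Fin r ⊕ Fin m) → ℝ) (B : Finset (Fin r ⊕ Fin m)) : Prop :=
  ∃ ε₀ > (0 : ℝ), ∀ ε : ℝ, 0 < ε → ε < ε₀ → x + ε • w ∈ Pclosed M B

end

/-!
Cauchy–Binet applied to `D Dᵀ = 1 + M Mᵀ` gives `Σ_B m(B)² = det (1 + M Mᵀ) = det 𝐃`.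

The piece `P(B)` is the product of the parallelepiped spanned by the columns `B` of `D` and
the one spanned by the columns `Bᶜ` of `D̂`. The rows of `D` and of `D̂` span orthogonal
complements, so complementary maximal minors of `D` and `D̂` agree up to sign, and
`vol P(B) = m(B)²`.

A point in the open pieces of two bases `B ≠ B'` gives `u ∈ ker D` and `v ∈ ker D̂ = im Dᵀ`
whose coordinatewise products are all `≤ 0`, and `< 0` on `B \ B'`, contradicting
`u ⬝ᵥ v = 0`. So the open pieces are disjoint; they have the same volumes as the closed ones,
hence the volume of the tile is the sum of the volumes of its pieces.
-/

open Finset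

theorem Finset.exists_perm_eq_orderEmbOfFin_comp {ι : Type*} [LinearOrder ι] {k : ℕ}
    {p : Fin k → ι} (hp : Function.Injective p) (h : (univ.image p).card = k) :
    ∃ σ : Equiv.Perm (Fin k), p = (univ.image p).orderEmbOfFin h ∘ σ := by
  refine ⟨(Tuple.sort p)⁻¹, ?_⟩
  have hsorted := orderEmbOfFin_unique h (f := p ∘ Tuple.sort p)
    (fun i => mem_image_of_mem p (mem_univ _))
    ((Tuple.monotone_sort p).strictMono_of_injective (hp.comp (Tuple.sort p).injective))
  rw [← hsorted]
  ext i
  simp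

theorem Finset.sum_filter_image_eq_sum_perm {M : Type*} [AddCommMonoid M] {ι : Type*}
    [Fintype ι] [LinearOrder ι] {k : ℕ} {S : Finset ι} (h : S.card = k) (F : (Fin k → ι) → M) :
    ∑ p with univ.image p = S, F p = ∑ σ : Equiv.Perm (Fin k), F (S.orderEmbOfFin h ∘ σ) := by
  symm
  refine sum_nbij (fun σ => S.orderEmbOfFin h ∘ σ) (fun σ _ => ?_)
    (fun σ _ τ _ hστ => ?_) (fun p hp => ?_) (fun _ _ => rfl)
  · simp [← image_image]
  · exact DFunLike.coe_injective ((S.orderEmbOfFin h).injective.comp_left hστ)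
  · replace hp : univ.image p = S := (mem_filter.1 hp).2
    have hcard : (univ.image p).card = k := hp ▸ h
    have hinj : Function.Injective p := by
      rw [← Set.injOn_univ, ← coe_univ]
      exact card_image_iff.1 (by simpa using hcard)
    obtain ⟨σ, hσ⟩ := exists_perm_eq_orderEmbOfFin_comp hinj hcard
    subst hp
    exact ⟨σ, mem_coe.2 (mem_univ _), hσ.symm⟩

namespace Matrix

variable {R : Type*} [CommRing R]

theorem det_mul_eq_sum_det_submatrix_mul_prod {ι κ : Type*} [Fintype ι] [Fintype κ]
    [DecidableEq κ] (A : Matrix κ ι R) (B : Matrix ι κ R) :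
    (A * B).det = ∑ p : κ → ι, (A.submatrix id p).det * ∏ i, B (p i) i := by
  simp only [det_apply', mul_apply, prod_univ_sum, mul_sum, Fintype.piFinset_univ, sum_mul]
  rw [sum_comm]
  refine sum_congr rfl fun p _ => sum_congr rfl fun σ _ => ?_
  simp only [submatrix_apply, id_eq, prod_mul_distrib]
  ring

theorem injective_of_det_submatrix_ne_zero {ι κ : Type*} [Fintype κ] [DecidableEq κ]
    {A : Matrix κ ι R} {p : κ → ι} (h : (A.submatrix id p).det ≠ 0) : Function.Injective p := by
  intro i j hij
  by_contra hne
  exact h (det_zero_of_column_eq hne fun l => by simp [hij])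

/-- The **Cauchy–Binet formula**. -/
theorem det_mul_eq_sum_powersetCard {ι : Type*} [Fintype ι] [LinearOrder ι] {k : ℕ}
    (A : Matrix (Fin k) ι R) (B : Matrix ι (Fin k) R) :
    (A * B).det = ∑ S ∈ powersetCard k univ,
      if h : S.card = k then
        (A.submatrix id (S.orderEmbOfFin h)).det * (B.submatrix (S.orderEmbOfFin h) id).det
      else 0 := by
  rw [det_mul_eq_sum_det_submatrix_mul_prod,
    ← sum_filter_of_ne (p := fun p => univ.image p ∈ powersetCard k univ),
    ← sum_fiberwise_eq_sum_filter]
  · refine sum_congr rfl fun S hS => ?_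
    have h := (mem_powersetCard.1 hS).2
    rw [dif_pos h, sum_filter_image_eq_sum_perm h, det_apply' (B.submatrix _ id), mul_sum]
    refine sum_congr rfl fun σ _ => ?_
    rw [show A.submatrix id (S.orderEmbOfFin h ∘ σ) =
      (A.submatrix id (S.orderEmbOfFin h)).submatrix id σ from rfl, det_permute']
    simp only [submatrix_apply, id_eq, Function.comp_apply]
    ring
  · intro p _ hp
    have hinj := injective_of_det_submatrix_ne_zero (left_ne_zero_of_mul hp)
    simp [card_image_of_injective _ hinj]

theorem det_mul_transpose_eq_sum_powersetCard {ι : Type*} [Fintype ι] [LinearOrder ι] {k : ℕ}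
    (A : Matrix (Fin k) ι R) :
    (A * Aᵀ).det = ∑ S ∈ powersetCard k univ,
      if h : S.card = k then (A.submatrix id (S.orderEmbOfFin h)).det ^ 2 else 0 := by
  simp_rw [det_mul_eq_sum_powersetCard, ← transpose_submatrix, det_transpose, sq]

theorem dotProduct_eq_zero_of_fromCols_mulVec {ρ μ : Type*} [Fintype ρ] [Fintype μ]
    [DecidableEq ρ] [DecidableEq μ] (N : Matrix ρ μ R) {u v : ρ ⊕ μ → R}
    (hu : fromCols 1 N *ᵥ u = 0) (hv : fromCols (-Nᵀ) 1 *ᵥ v = 0) : u ⬝ᵥ v = 0 := by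
  rw [fromCols_mulVec, one_mulVec] at hu hv
  have hv₂ : v ∘ Sum.inr = Nᵀ *ᵥ (v ∘ Sum.inl) := by
    rw [neg_mulVec] at hv
    linear_combination hv
  have hu₁ : u ∘ Sum.inl = -(N *ᵥ (u ∘ Sum.inr)) := by linear_combination hu
  calc u ⬝ᵥ v = u ∘ Sum.inl ⬝ᵥ v ∘ Sum.inl + u ∘ Sum.inr ⬝ᵥ v ∘ Sum.inr :=
        Fintype.sum_sum_type _
    _ = 0 := by
      rw [hv₂, hu₁, dotProduct_mulVec, vecMul_transpose, neg_dotProduct, dotProduct_comm]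
      ring

theorem mulVec_ite_sub_ite {ι κ : Type*} [Fintype ι] [DecidableEq ι] (A : Matrix κ ι R)
    (S T : Finset ι) (a b : ι → R) :
    A *ᵥ (fun j => (if j ∈ S then a j else 0) - if j ∈ T then b j else 0) =
      ∑ j ∈ S, a j • Aᵀ j - ∑ j ∈ T, b j • Aᵀ j := by
  simp [mulVec_eq_sum, op_smul_eq_smul, sub_smul, ite_smul, sum_sub_distrib, sum_ite_mem]

theorem det_one_add_mul_transpose_ne_zero {n k : Type*} [Fintype n] [DecidableEq n] [Fintype k]
    (A : Matrix n k ℤ) : (1 + A * Aᵀ).det ≠ 0 := by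
  let N : Matrix n k ℝ := A.map Int.cast
  have hpsd := posSemidef_self_mul_conjTranspose N
  rw [conjTranspose_eq_transpose_of_trivial] at hpsd
  have hcast : ((1 + A * Aᵀ).det : ℝ) = (1 + N * Nᵀ).det := by
    rw [Int.cast_det]
    congr 1
    ext i j
    simp [N, mul_apply, one_apply, apply_ite (Int.cast : ℤ → ℝ)]
  rw [← Int.cast_ne_zero (α := ℝ), hcast]
  exact (PosDef.one.add_posSemidef hpsd).det_pos.ne'

end Matrix

theorem dotProduct_lt_zero_of_ne {ι : Type*} [Fintype ι] [DecidableEq ι] {B B' : Finset ι}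
    (hcard : B.card = B'.card) (hne : B ≠ B') {a a' b b' : ι → ℝ} (ha : ∀ j ∈ B, 0 < a j)
    (ha' : ∀ j ∈ B', 0 < a' j) (hb : ∀ j ∈ Bᶜ, 0 < b j) (hb' : ∀ j ∈ B'ᶜ, 0 < b' j) :
    (fun j => (if j ∈ B then a j else 0) - if j ∈ B' then a' j else 0) ⬝ᵥ
      (fun j => (if j ∈ Bᶜ then b j else 0) - if j ∈ B'ᶜ then b' j else 0) < 0 := by
  simp only [mem_compl] at hb hb' ⊢
  obtain ⟨j₀, hj₀, hj₀'⟩ := not_subset.1 fun h => hne (eq_of_subset_of_card_le h hcard.ge)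
  calc _ < ∑ _j : ι, (0 : ℝ) := by
        refine sum_lt_sum (fun j _ => ?_) ⟨j₀, mem_univ _, ?_⟩
        · by_cases hj : j ∈ B <;> by_cases hj' : j ∈ B'
          · simp [hj, hj']
          · simpa [hj, hj'] using mul_pos (ha j hj) (hb' j hj') |>.le
          · simpa [hj, hj'] using mul_pos (ha' j hj') (hb j hj) |>.le
          · simp [hj, hj']
        · simpa [hj₀, hj₀'] using mul_pos (ha j₀ hj₀) (hb' j₀ hj₀')
    _ = 0 := sum_const_zero

theorem Equiv.Perm.exists_comp_inl_eq {α β : Type*} [Fintype α] [Fintype β] {e : α → α ⊕ β}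
    (he : Function.Injective e) : ∃ τ : Equiv.Perm (α ⊕ β), τ ∘ Sum.inl = e := by
  obtain ⟨g, hg⟩ := Set.MapsTo.exists_equiv_extend_of_card_eq (t := univ)
    (s := Set.range Sum.inl) (f := Sum.elim e Sum.inr) (by simp)
    (fun _ _ => mem_coe.2 (mem_univ _))
    (by rintro _ ⟨a, rfl⟩ _ ⟨b, rfl⟩ h; exact congrArg _ (he h))
  exact ⟨g.trans (Equiv.subtypeUnivEquiv mem_univ), funext fun a => hg _ ⟨a, rfl⟩⟩

theorem image_comp_inr_eq_compl {α β γ : Type*} [Fintype α] [Fintype β] [DecidableEq γ]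
    [Fintype γ] (τ : α ⊕ β ≃ γ) {B : Finset γ} (h : univ.image (τ ∘ Sum.inl) = B) :
    univ.image (τ ∘ Sum.inr) = Bᶜ := by
  subst h
  ext x
  obtain ⟨y | y, rfl⟩ := τ.surjective x <;> simp [τ.injective.eq_iff]

theorem measure_biUnion_finset_eq_sum_of_subsets {α ι : Type*} [MeasurableSpace α]
    {μ : Measure α} {s : Finset ι} {P Q : ι → Set α} (hQP : ∀ i ∈ s, Q i ⊆ P i)
    (hQ : (s : Set ι).PairwiseDisjoint Q) (hmeas : ∀ i ∈ s, MeasurableSet (Q i))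
    (hμ : ∀ i ∈ s, μ (Q i) = μ (P i)) : μ (⋃ i ∈ s, P i) = ∑ i ∈ s, μ (P i) := by
  refine le_antisymm (measure_biUnion_finset_le s P) ?_
  calc ∑ i ∈ s, μ (P i) = ∑ i ∈ s, μ (Q i) := (sum_congr rfl hμ).symm
    _ = μ (⋃ i ∈ s, Q i) := (measure_biUnion_finset hQ hmeas).symm
    _ ≤ μ (⋃ i ∈ s, P i) := measure_mono (Set.iUnion₂_mono hQP)

def linCombSet {ι κ : Type*} (I : Set ℝ) (v : ι → κ → ℝ) (S : Finset ι) : Set (κ → ℝ) :=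
  {x | ∃ a : ι → ℝ, (∀ i ∈ S, a i ∈ I) ∧ x = ∑ i ∈ S, a i • v i}

theorem linCombSet_mono {ι κ : Type*} {I J : Set ℝ} (hIJ : I ⊆ J) (v : ι → κ → ℝ)
    (S : Finset ι) : linCombSet I v S ⊆ linCombSet J v S :=
  fun _ ⟨a, ha, hx⟩ => ⟨a, fun i hi => hIJ (ha i hi), hx⟩

section linCombSet

variable {ι κ : Type*} [DecidableEq ι] [Fintype κ] [DecidableEq κ] {I : Set ℝ} {S : Finset ι}
  {e : κ → ι}

theorem linCombSet_transpose_eq_image (A : Matrix κ ι ℝ) (he : Function.Injective e)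
    (hS : univ.image e = S) :
    linCombSet I Aᵀ S = Matrix.toLin' (A.submatrix id e) '' Set.univ.pi fun _ => I := by
  have hsum (a : ι → ℝ) : ∑ i ∈ S, a i • Aᵀ i = Matrix.toLin' (A.submatrix id e) (a ∘ e) := by
    rw [← hS, sum_image he.injOn, Matrix.toLin'_apply, mulVec_eq_sum]
    simp [op_smul_eq_smul]
    rfl
  ext x
  constructor
  · rintro ⟨a, ha, rfl⟩
    exact ⟨a ∘ e, fun i _ => ha _ (hS ▸ mem_image_of_mem e (mem_univ i)), (hsum a).symm⟩
  · rintro ⟨t, ht, rfl⟩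
    refine ⟨Function.extend e t 0, fun j hj => ?_, ?_⟩
    · obtain ⟨i, -, rfl⟩ := mem_image.1 (hS ▸ hj)
      rw [he.extend_apply]
      exact ht i (Set.mem_univ _)
    · rw [hsum]
      congr
      funext i
      exact (he.extend_apply t 0 i).symm

theorem volume_linCombSet_transpose (A : Matrix κ ι ℝ) (he : Function.Injective e)
    (hS : univ.image e = S) :
    volume (linCombSet I Aᵀ S) =
      ENNReal.ofReal |(A.submatrix id e).det| * volume I ^ Fintype.card κ := by
  rw [linCombSet_transpose_eq_image A he hS, Measure.addHaar_image_linearMap,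
    LinearMap.det_toLin', volume_pi_pi, prod_const, card_univ]

theorem isOpen_linCombSet_transpose (A : Matrix κ ι ℝ) (he : Function.Injective e)
    (hS : univ.image e = S) (hI : IsOpen I) (hdet : (A.submatrix id e).det ≠ 0) :
    IsOpen (linCombSet I Aᵀ S) := by
  rw [linCombSet_transpose_eq_image A he hS]
  have hsurj : Function.Surjective (Matrix.toLin' (A.submatrix id e)) :=
    mulVec_surjective_iff_isUnit.2 ((isUnit_iff_isUnit_det _).2 hdet.isUnit)
  exact LinearMap.isOpenMap_of_finiteDimensional _ hsurj _
    (isOpen_set_pi Set.finite_univ fun _ _ => hI)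

theorem ofReal_abs_det_map_intCast (A : Matrix κ κ ℤ) :
    ENNReal.ofReal |(A.map (Int.cast : ℤ → ℝ)).det| = A.det.natAbs := by
  rw [← Int.cast_det, ← Int.cast_abs, ← Int.natCast_natAbs, Int.cast_natCast,
    ENNReal.ofReal_natCast]

theorem volume_linCombSet_intCast (A : Matrix κ ι ℤ) (he : Function.Injective e)
    (hS : univ.image e = S) :
    volume (linCombSet I (A.map (Int.cast : ℤ → ℝ))ᵀ S) =
      (A.submatrix id e).det.natAbs * volume I ^ Fintype.card κ := by
  rw [volume_linCombSet_transpose _ he hS, submatrix_map, ofReal_abs_det_map_intCast]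

end linCombSet

theorem volume_setOf_comp_inl_comp_inr {α β : Type*} [Fintype α] [Fintype β]
    (S₁ : Set (α → ℝ)) (S₂ : Set (β → ℝ)) :
    volume {x : α ⊕ β → ℝ | x ∘ Sum.inl ∈ S₁ ∧ x ∘ Sum.inr ∈ S₂} = volume S₁ * volume S₂ := by
  rw [← Measure.prod_prod, ← Measure.volume_eq_prod,
    ← (volume_measurePreserving_sumPiEquivProdPi fun _ => ℝ).measure_preimage_equiv]
  rfl

section Tile

variable {r m : ℕ}

theorem colEnum_injective {B : Finset (Fin r ⊕ Fin m)} (h : (B.image finSumFinEquiv).card = r) :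
    Function.Injective (colEnum B h) :=
  finSumFinEquiv.symm.injective.comp (Subtype.val_injective.comp (OrderIso.injective _))

theorem image_colEnum {B : Finset (Fin r ⊕ Fin m)} (h : (B.image finSumFinEquiv).card = r) :
    univ.image (colEnum B h) = B := by
  have : colEnum B h = finSumFinEquiv.symm ∘ (B.image finSumFinEquiv).orderEmbOfFin h := rfl
  rw [this, ← image_image, image_orderEmbOfFin_univ, image_image]
  simp

theorem card_image_finSumFinEquiv {B : Finset (Fin r ⊕ Fin m)} (hB : B.card = r) :
    (B.image finSumFinEquiv).card = r := by
  rw [card_image_of_injective _ finSumFinEquiv.injective, hB]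

variable (M : Matrix (Fin r) (Fin m) ℤ)

theorem Dfull_eq_fromRows : Dfull M = fromRows (Dmat M) (Dhat M) := by
  rw [Dmat, Dhat, fromRows_fromCols_eq_fromBlocks, Dfull]

theorem Dmat_mul_transpose : Dmat M * (Dmat M)ᵀ = 1 + M * Mᵀ := by
  rw [Dmat, transpose_fromCols, fromCols_mul_fromRows, transpose_one, Matrix.one_mul]

theorem Dmat_mul_Dhat_transpose : Dmat M * (Dhat M)ᵀ = 0 := by
  rw [Dmat, Dhat, transpose_fromCols, fromCols_mul_fromRows]
  simp

theorem det_Dfull : (Dfull M).det = (1 + M * Mᵀ).det := by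
  rw [Dfull, det_fromBlocks_one₁₁, Matrix.neg_mul, sub_neg_eq_add, det_one_add_mul_comm]

theorem sum_mult_sq_eq_det_Dfull :
    ((∑ B ∈ powersetCard r univ, mult M B ^ 2 : ℕ) : ℤ) = (Dfull M).det := by
  set D' := (Dmat M).submatrix id finSumFinEquiv.symm
  have hD' : D' * D'ᵀ = Dmat M * (Dmat M)ᵀ := by
    rw [transpose_submatrix, submatrix_mul_equiv, submatrix_id_id]
  have hmult (B : Finset (Fin r ⊕ Fin m)) : ((mult M B ^ 2 : ℕ) : ℤ) =
      if h : (B.image finSumFinEquiv).card = r then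
        (D'.submatrix id ((B.image finSumFinEquiv).orderEmbOfFin h)).det ^ 2 else 0 := by
    unfold mult
    split_ifs
    · rw [Nat.cast_pow, Int.natCast_natAbs, sq_abs]
      rfl
    · simp
  rw [det_Dfull, ← Dmat_mul_transpose, ← hD', det_mul_transpose_eq_sum_powersetCard,
    ← map_univ_equiv finSumFinEquiv, powersetCard_map, sum_map, Nat.cast_sum]
  refine sum_congr rfl fun B _ => ?_
  rw [RelEmbedding.coe_toEmbedding, mapEmbedding_apply, map_eq_image]
  exact hmult B

theorem natAbs_det_Dhat_submatrix_inr (τ : Equiv.Perm (Fin r ⊕ Fin m)) :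
    ((Dhat M).submatrix id (τ ∘ Sum.inr)).det.natAbs =
      ((Dmat M).submatrix id (τ ∘ Sum.inl)).det.natAbs := by
  -- `F` stacks `D` on the rows of `1` indexed by `τ ∘ inr`. After permuting its columns by `τ`
  -- it is block triangular with diagonal `D_{τ ∘ inl}, 1`, while `F 𝐃ᵀ` is block triangular
  -- with diagonal `1 + M Mᵀ, (D̂_{τ ∘ inr})ᵀ`; and `det 𝐃 = det (1 + M Mᵀ) ≠ 0`.
  set F := fromRows (Dmat M) ((1 : Matrix (Fin r ⊕ Fin m) _ ℤ).submatrix (τ ∘ Sum.inr) id)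
  have hFτ : F.submatrix id τ = fromBlocks ((Dmat M).submatrix id (τ ∘ Sum.inl))
      ((Dmat M).submatrix id (τ ∘ Sum.inr)) 0 1 := by
    ext (i | i) (j | j) <;> simp [F, one_apply, τ.injective.eq_iff]
  have hdetF : F.det.natAbs = ((Dmat M).submatrix id (τ ∘ Sum.inl)).det.natAbs := by
    have := det_permute' τ F
    rw [hFτ, det_fromBlocks_zero₂₁, det_one, mul_one] at this
    simp [this, Int.natAbs_mul]
  have hprod : F * (Dfull M)ᵀ = fromBlocks (1 + M * Mᵀ) 0
      ((Dmat M).submatrix id (τ ∘ Sum.inr))ᵀ ((Dhat M).submatrix id (τ ∘ Sum.inr))ᵀ := by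
    rw [Dfull_eq_fromRows, transpose_fromRows, fromRows_mul_fromCols, Dmat_mul_transpose,
      Dmat_mul_Dhat_transpose]
    congr 1 <;> ext i j <;> simp [Matrix.mul_apply, one_apply]
  have hdet := congrArg det hprod
  rw [det_mul, det_transpose, det_fromBlocks_zero₁₂, det_transpose, det_Dfull, mul_comm] at hdet
  rw [← hdetF, mul_left_cancel₀ (det_one_add_mul_transpose_ne_zero M) hdet]

theorem sum_mult_sq_eq_natAbs_det_Dfull :
    ∑ B ∈ powersetCard r univ, mult M B ^ 2 = (Dfull M).det.natAbs := by
  rw [← sum_mult_sq_eq_det_Dfull, Int.natAbs_natCast]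

theorem exists_perm_enumerating_mult_eq {B : Finset (Fin r ⊕ Fin m)} (hB : B.card = r) :
    ∃ τ : Equiv.Perm (Fin r ⊕ Fin m), univ.image (τ ∘ Sum.inl) = B ∧
      univ.image (τ ∘ Sum.inr) = Bᶜ ∧
      mult M B = ((Dmat M).submatrix id (τ ∘ Sum.inl)).det.natAbs ∧
      mult M B = ((Dhat M).submatrix id (τ ∘ Sum.inr)).det.natAbs := by
  have h := card_image_finSumFinEquiv hB
  obtain ⟨τ, hτ⟩ := Equiv.Perm.exists_comp_inl_eq (colEnum_injective h)
  have hmult : mult M B = ((Dmat M).submatrix id (τ ∘ Sum.inl)).det.natAbs := by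
    rw [mult, dif_pos h, hτ]
  have himage : univ.image (τ ∘ Sum.inl) = B := hτ ▸ image_colEnum h
  exact ⟨τ, himage, image_comp_inr_eq_compl τ himage, hmult,
    hmult.trans (natAbs_det_Dhat_submatrix_inr M τ).symm⟩

/-- `P(B)` with coefficients in `I` in place of `[0, 1]`. -/
def PofCoeffs (I : Set ℝ) (B : Finset (Fin r ⊕ Fin m)) : Set ((Fin r ⊕ Fin m) → ℝ) :=
  {x | x ∘ Sum.inl ∈ linCombSet I (colD M) B ∧ x ∘ Sum.inr ∈ linCombSet I (colDhat M) Bᶜ}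

variable {M} {I : Set ℝ} {B : Finset (Fin r ⊕ Fin m)}

theorem Pclosed_eq : Pclosed M B = PofCoeffs M (Set.Icc 0 1) B := rfl

theorem PofCoeffs_mono {J : Set ℝ} (hIJ : I ⊆ J) : PofCoeffs M I B ⊆ PofCoeffs M J B :=
  fun _ ⟨h₁, h₂⟩ => ⟨linCombSet_mono hIJ _ _ h₁, linCombSet_mono hIJ _ _ h₂⟩

theorem colD_eq : colD M = ((Dmat M).map (Int.cast : ℤ → ℝ))ᵀ := rfl

theorem colDhat_eq : colDhat M = ((Dhat M).map (Int.cast : ℤ → ℝ))ᵀ := rfl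

theorem Dmat_map_intCast :
    (Dmat M).map (Int.cast : ℤ → ℝ) = fromCols 1 (M.map Int.cast) := by
  ext i (j | j) <;> simp [Dmat, one_apply, apply_ite (Int.cast : ℤ → ℝ)]

theorem Dhat_map_intCast :
    (Dhat M).map (Int.cast : ℤ → ℝ) = fromCols (-(M.map Int.cast)ᵀ) 1 := by
  ext i (j | j) <;> simp [Dhat, one_apply, apply_ite (Int.cast : ℤ → ℝ)]

theorem volume_PofCoeffs (hI : volume I = 1) (hB : B.card = r) :
    volume (PofCoeffs M I B) = (mult M B : ℝ≥0∞) ^ 2 := by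
  obtain ⟨τ, h₁, h₂, hm₁, hm₂⟩ := exists_perm_enumerating_mult_eq M hB
  rw [PofCoeffs, volume_setOf_comp_inl_comp_inr, colD_eq, colDhat_eq,
    volume_linCombSet_intCast _ (τ.injective.comp Sum.inl_injective) h₁,
    volume_linCombSet_intCast _ (τ.injective.comp Sum.inr_injective) h₂, hI]
  simp only [one_pow, mul_one, ← hm₁, ← hm₂, sq]

theorem isOpen_PofCoeffs (hI : IsOpen I) (hB : IsBasis M B) : IsOpen (PofCoeffs M I B) := by
  obtain ⟨τ, h₁, h₂, hm₁, hm₂⟩ := exists_perm_enumerating_mult_eq M hB.1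
  have hdet {k : ℕ} (A : Matrix (Fin k) (Fin r ⊕ Fin m) ℤ) (e : Fin k → Fin r ⊕ Fin m)
      (h : (A.submatrix id e).det.natAbs ≠ 0) :
      ((A.map (Int.cast : ℤ → ℝ)).submatrix id e).det ≠ 0 := by
    rwa [submatrix_map, ← Int.cast_det, Int.cast_ne_zero, ← Int.natAbs_ne_zero]
  have hO₁ := isOpen_linCombSet_transpose _ (τ.injective.comp Sum.inl_injective) h₁ hI
    (hdet _ _ (hm₁ ▸ hB.2))
  have hO₂ := isOpen_linCombSet_transpose _ (τ.injective.comp Sum.inr_injective) h₂ hI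
    (hdet _ _ (hm₂ ▸ hB.2))
  exact (hO₁.preimage (by fun_prop)).inter (hO₂.preimage (by fun_prop))

theorem disjoint_PofCoeffs (hI : I ⊆ Set.Ioi 0) {B' : Finset (Fin r ⊕ Fin m)} (hB : B.card = r)
    (hB' : B'.card = r) (hne : B ≠ B') : Disjoint (PofCoeffs M I B) (PofCoeffs M I B') := by
  rw [Set.disjoint_left]
  rintro x ⟨⟨a, ha, hxa⟩, ⟨b, hb, hxb⟩⟩ ⟨⟨a', ha', hxa'⟩, ⟨b', hb', hxb'⟩⟩
  refine (dotProduct_lt_zero_of_ne (hB.trans hB'.symm) hne (fun j hj => hI (ha j hj))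
    (fun j hj => hI (ha' j hj)) (fun j hj => hI (hb j hj)) (fun j hj => hI (hb' j hj))).ne
    (dotProduct_eq_zero_of_fromCols_mulVec (M.map (Int.cast : ℤ → ℝ)) ?_ ?_)
  · rw [← Dmat_map_intCast, mulVec_ite_sub_ite, ← colD_eq, ← hxa, ← hxa', sub_self]
  · rw [← Dhat_map_intCast, mulVec_ite_sub_ite, ← colDhat_eq, ← hxb, ← hxb', sub_self]

variable (M)

theorem volume_Tile :
    volume (Tile M) = ∑ B ∈ powersetCard r univ, (mult M B : ℝ≥0∞) ^ 2 := by
  set bases := {B ∈ powersetCard r (univ : Finset (Fin r ⊕ Fin m)) | mult M B ≠ 0}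
  have hbasis {B} (hB : B ∈ bases) : IsBasis M B := by
    simpa [bases, IsBasis, mem_powersetCard] using hB
  have hTile : Tile M = ⋃ B ∈ bases, PofCoeffs M (Set.Icc 0 1) B := by
    ext x
    simp [Tile, bases, IsBasis, mem_powersetCard, Pclosed_eq]
  rw [hTile, ← sum_filter_of_ne (p := fun B => mult M B ≠ 0) fun B _ h => by simpa using h,
    measure_biUnion_finset_eq_sum_of_subsets (Q := PofCoeffs M (Set.Ioo 0 1))
      (fun B _ => PofCoeffs_mono Set.Ioo_subset_Icc_self)
      (fun B hB B' hB' => disjoint_PofCoeffs (fun _ h => h.1) (hbasis hB).1 (hbasis hB').1)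
      (fun B hB => (isOpen_PofCoeffs isOpen_Ioo (hbasis hB)).measurableSet)
      (fun B hB => by rw [volume_PofCoeffs (by simp) (hbasis hB).1,
        volume_PofCoeffs (by simp) (hbasis hB).1])]
  exact sum_congr rfl fun B hB => volume_PofCoeffs (by simp) (hbasis hB).1

end Tile

/-- the tile `T(D)` has Lebesgue measure `Σ_B m(B)²`, which equals
`|det 𝐃|`. -/
theorem stmt12 {r m : ℕ} (M : Matrix (Fin r) (Fin m) ℤ) :
    volume (Tile M) =
      ∑ B ∈ Finset.powersetCard r (Finset.univ : Finset (Fin r ⊕ Fin m)),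
        (mult M B : ℝ≥0∞) ^ 2 ∧
    ∑ B ∈ Finset.powersetCard r (Finset.univ : Finset (Fin r ⊕ Fin m)),
        (mult M B) ^ 2 = (Dfull M).det.natAbs :=
  ⟨volume_Tile M, sum_mult_sq_eq_natAbs_det_Dfull M⟩
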